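/- Every nonzero fractional O'-ideal a of K (i.e. an O'-submodule of K with d·a ⊆ O' for some d ∈ K*) that is not finitely generated as an O'-module is equal to ℘ₙ = tⁿ·O_K for a uniquely determined integer n ∈ ℤ. -/

import Mathlib

/-! `O'` is the valuation ring of the rank-two valuation `ν' = nu k : K* → ℤ ×ₗ ℤ`, so an
`O'`-submodule `a` of `K` contains every `y ≠ 0` with `ν' x ≤ ν' y` for some nonzero `x ∈ a`;
thus `a` is determined by the upper closure of `ν'(a ∖ 0)`, and it is principal as soon as
`ν'(a ∖ 0)` has a least element. For a fractional ideal the `t`-orders of its elements are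
bounded below and attain a minimum `n`; if `a` is not finitely generated, the `u`-orders of
its elements of `t`-order `n` are unbounded below, so the upper closure of `ν'(a ∖ 0)` is the
half-plane `{(m, j) | n ≤ m}`, which is also that of `℘ₙ = tⁿ·O_K`. -/

set_option synthInstance.maxHeartbeats 1000000
set_option maxHeartbeats 1000000

noncomputable section

open HahnSeries

namespace TwoDimLocal

variable (k : Type) [Field k]

/-- `k((u))`, the field of Laurent series over `k`. -/
abbrev K1 := LaurentSeries k

/-- `K = k((u))((t))`, the two-dimensional local field of iterated Laurent series. -/
abbrev K := LaurentSeries (LaurentSeries k)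

section Nonneg

variable (F : Type) [Field F]

lemma order_nonneg_of_support {x : LaurentSeries F} (hx : x ≠ 0)
    (h : ∀ n : ℤ, n < 0 → x.coeff n = 0) : 0 ≤ x.order := by
  by_contra hlt
  push_neg at hlt
  exact coeff_order_eq_zero.not.2 hx (h x.order hlt)

/-- The subring `F[[X]] ⊆ F((X))` of power series, described by vanishing of the
coefficients of negative index. -/
def nonneg : Subring (LaurentSeries F) where
  carrier := {x | ∀ n : ℤ, n < 0 → x.coeff n = 0}
  zero_mem' := by intro n _; simp
  one_mem' := by
    intro n hn
    rw [HahnSeries.coeff_one, if_neg (by omega)]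
  add_mem' := by
    intro a b ha hb n hn
    rw [HahnSeries.coeff_add, ha n hn, hb n hn, add_zero]
  neg_mem' := by
    intro a ha n hn
    rw [HahnSeries.coeff_neg, ha n hn, neg_zero]
  mul_mem' := by
    intro a b ha hb n hn
    by_contra hne
    obtain ⟨i, hi, j, hj, rfl⟩ := support_mul_subset ((mem_support _ _).2 hne)
    rw [mem_support] at hi hj
    have hi0 : 0 ≤ i := by by_contra h; push_neg at h; exact hi (ha i h)
    have hj0 : 0 ≤ j := by by_contra h; push_neg at h; exact hj (hb j h)
    exact absurd hn (not_lt.2 (add_nonneg hi0 hj0))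

lemma mem_nonneg_iff {x : LaurentSeries F} :
    x ∈ nonneg F ↔ ∀ n : ℤ, n < 0 → x.coeff n = 0 := Iff.rfl

lemma coeff_zero_mul {x y : LaurentSeries F} (hx : x ∈ nonneg F) (hy : y ∈ nonneg F) :
    (x * y).coeff 0 = x.coeff 0 * y.coeff 0 := by
  rcases eq_or_ne x 0 with rfl | hx0
  · simp
  rcases eq_or_ne y 0 with rfl | hy0
  · simp
  have hxo : 0 ≤ x.order := order_nonneg_of_support F hx0 hx
  have hyo : 0 ≤ y.order := order_nonneg_of_support F hy0 hy
  rcases lt_or_eq_of_le hxo with hxo' | hxo'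
  · have h1 : x.coeff 0 = 0 := HahnSeries.coeff_eq_zero_of_lt_order hxo'
    have h2 : (x * y).coeff 0 = 0 := by
      apply HahnSeries.coeff_eq_zero_of_lt_order
      rw [HahnSeries.order_mul hx0 hy0]
      omega
    rw [h1, h2, zero_mul]
  rcases lt_or_eq_of_le hyo with hyo' | hyo'
  · have h1 : y.coeff 0 = 0 := HahnSeries.coeff_eq_zero_of_lt_order hyo'
    have h2 : (x * y).coeff 0 = 0 := by
      apply HahnSeries.coeff_eq_zero_of_lt_order
      rw [HahnSeries.order_mul hx0 hy0]
      omega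
    rw [h1, h2, mul_zero]
  have := HahnSeries.coeff_mul_order_add_order x y
  rw [HahnSeries.leadingCoeff_eq, HahnSeries.leadingCoeff_eq, ← hxo', ← hyo'] at this
  simpa using this

end Nonneg

/-- The ring of integers `O_K = k((u))[[t]]` of `K` with respect to the `t`-adic valuation. -/
def OK : Subring (K k) := nonneg (K1 k)

/-- The rank-2 valuation subring `O' = p⁻¹(k[[u]]) ⊆ K`, consisting of those `t`-adic
integers whose constant `t`-coefficient is a power series in `u`. -/
def Oprime : Subring (K k) where
  carrier := {x | x ∈ OK k ∧ x.coeff 0 ∈ nonneg k}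
  zero_mem' := ⟨Subring.zero_mem _, by simp⟩
  one_mem' := ⟨Subring.one_mem _, by
    intro n hn
    rw [show ((1 : K k).coeff 0) = 1 from by rw [HahnSeries.coeff_one]; simp]
    rw [HahnSeries.coeff_one, if_neg (by omega)]⟩
  add_mem' := by
    rintro a b ⟨ha1, ha2⟩ ⟨hb1, hb2⟩
    refine ⟨Subring.add_mem _ ha1 hb1, ?_⟩
    rw [HahnSeries.coeff_add]
    exact Subring.add_mem _ ha2 hb2
  neg_mem' := by
    rintro a ⟨ha1, ha2⟩
    refine ⟨Subring.neg_mem _ ha1, ?_⟩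
    rw [HahnSeries.coeff_neg]
    exact Subring.neg_mem _ ha2
  mul_mem' := by
    rintro a b ⟨ha1, ha2⟩ ⟨hb1, hb2⟩
    refine ⟨Subring.mul_mem _ ha1 hb1, ?_⟩
    rw [coeff_zero_mul (K1 k) ha1 hb1]
    exact Subring.mul_mem _ ha2 hb2

lemma Oprime_le_OK : (Oprime k : Set (K k)) ⊆ (OK k : Set (K k)) := fun _ h => h.1

/-- The local parameter `t` of `K = k((u))((t))`. -/
def t : K k := HahnSeries.single (1 : ℤ) 1

/-- The local parameter `u` of `K = k((u))((t))`, i.e. the image in `K` of the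
local parameter of `k((u))`. -/
def u : K k := HahnSeries.C (HahnSeries.single (1 : ℤ) (1 : k))

/-- The maximal ideal `m = p⁻¹(u·k[[u]])` of `O'`, as a subset of `K`. -/
def mSet : Set (K k) := {x | x ∈ Oprime k ∧ (x.coeff 0).coeff 0 = 0}

/-- The rank-two valuation `ν' : K* → ℤ ×ₗ ℤ`: the first component is the `t`-adic order,
the second one the `u`-adic order of the leading `t`-coefficient. (Junk value at `0`.) -/
def nu (x : K k) : ℤ ×ₗ ℤ := toLex (x.order, (x.coeff x.order).order)

end TwoDimLocal

namespace TwoDimLocal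

/-- `℘ₙ = tⁿ·O_K`, the `O'`-submodule of `K` generated by the elements `uⁱtⁿ`, `i ∈ ℤ`. -/
def wp (k : Type) [Field k] (n : ℤ) : Submodule (Oprime k) (K k) :=
  Submodule.span (Oprime k) {x | ∃ i : ℤ, x = u k ^ i * t k ^ n}

theorem _root_.Prod.Lex.exists_forall_exists_le_iff_of_not_isLeast {S : Set (ℤ ×ₗ ℤ)}
    (hne : S.Nonempty) (hbdd : BddBelow ((fun s => (ofLex s).1) '' S))
    (hS : ∀ s, ¬ IsLeast S s) :
    ∃ n : ℤ, ∀ z : ℤ ×ₗ ℤ, (∃ s ∈ S, s ≤ z) ↔ n ≤ (ofLex z).1 := by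
  obtain ⟨s₀, hs₀, hn⟩ : ∃ s₀ ∈ S, ∀ s ∈ S, (ofLex s₀).1 ≤ (ofLex s).1 := by
    obtain ⟨b, hb⟩ := hbdd
    obtain ⟨_, ⟨s₀, hs₀, rfl⟩, hmin⟩ := Int.exists_least_of_bdd
      (P := fun m => ∃ s ∈ S, (ofLex s).1 = m)
      ⟨b, fun _ ⟨s, hs, hm⟩ => hm ▸ hb ⟨s, hs, rfl⟩⟩ (hne.elim fun s hs => ⟨_, s, hs, rfl⟩)
    exact ⟨s₀, hs₀, fun s hs => hmin _ ⟨s, hs, rfl⟩⟩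
  refine ⟨(ofLex s₀).1, fun z =>
    ⟨fun ⟨s, hs, hsz⟩ => (hn s hs).trans (Prod.Lex.monotone_fst _ _ hsz), fun hz => ?_⟩⟩
  rcases hz.lt_or_eq with hlt | heq
  · exact ⟨s₀, hs₀, Prod.Lex.le_iff.2 (Or.inl hlt)⟩
  by_contra! hgt
  have hbdd_fibre : ∀ j, toLex ((ofLex s₀).1, j) ∈ S → (ofLex z).2 ≤ j := fun j hj => by
    rcases Prod.Lex.lt_iff.1 (hgt _ hj) with h | ⟨_, h⟩
    · exact absurd h (by rw [heq]; exact lt_irrefl _)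
    · exact h.le
  obtain ⟨j, hj, hjmin⟩ := Int.exists_least_of_bdd (P := fun j => toLex ((ofLex s₀).1, j) ∈ S)
    ⟨_, hbdd_fibre⟩ ⟨(ofLex s₀).2, hs₀⟩
  refine hS _ ⟨hj, fun s hs => Prod.Lex.le_iff.2 ?_⟩
  rcases (hn s hs).lt_or_eq with h | h
  · exact Or.inl h
  · exact Or.inr ⟨h, hjmin _ (by rw [h]; exact hs)⟩

section

variable {k : Type} [Field k]

lemma mem_nonneg_iff_order_nonneg {F : Type} [Field F] {x : LaurentSeries F} (hx : x ≠ 0) :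
    x ∈ nonneg F ↔ 0 ≤ x.order :=
  ⟨order_nonneg_of_support F hx, fun h _ hn => coeff_eq_zero_of_lt_order (hn.trans_le h)⟩

lemma order_nonneg_of_mem_Oprime {x : K k} (hx : x ∈ Oprime k) (hx0 : x ≠ 0) : 0 ≤ x.order :=
  order_nonneg_of_support _ hx0 hx.1

lemma neg_order_le_order_of_mul_mem_Oprime {d x : K k} (hd : d ≠ 0) (hx : x ≠ 0)
    (hdx : d * x ∈ Oprime k) : -d.order ≤ x.order := by
  have := order_nonneg_of_mem_Oprime hdx (mul_ne_zero hd hx)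
  rw [order_mul hd hx] at this
  omega

lemma nu_mul {x y : K k} (hx : x ≠ 0) (hy : y ≠ 0) : nu k (x * y) = nu k x + nu k y := by
  have hlead := coeff_mul_order_add_order x y
  rw [leadingCoeff_eq, leadingCoeff_eq] at hlead
  rw [nu, order_mul hx hy, hlead,
    order_mul (coeff_order_eq_zero.not.2 hx) (coeff_order_eq_zero.not.2 hy)]
  rfl

lemma mem_Oprime_iff_nu_nonneg {x : K k} (hx : x ≠ 0) : x ∈ Oprime k ↔ 0 ≤ nu k x := by
  have hlead : x.coeff x.order ≠ 0 := coeff_order_eq_zero.not.2 hx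
  change x ∈ OK k ∧ x.coeff 0 ∈ nonneg k ↔ toLex (0, 0) ≤ toLex _
  rw [OK, mem_nonneg_iff_order_nonneg hx, Prod.Lex.toLex_le_toLex]
  dsimp only
  constructor
  · rintro ⟨hord, hc⟩
    rcases hord.lt_or_eq with h | h
    · exact Or.inl h
    · rw [h] at hc
      exact Or.inr ⟨h, (mem_nonneg_iff_order_nonneg hlead).1 hc⟩
  · rintro (h | ⟨h, hc⟩)
    · refine ⟨h.le, ?_⟩
      rw [coeff_eq_zero_of_lt_order h]
      exact zero_mem _
    · refine ⟨h.le, ?_⟩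
      rw [h]
      exact (mem_nonneg_iff_order_nonneg hlead).2 hc

lemma mem_of_nu_le (a : Submodule (Oprime k) (K k)) {x y : K k} (hxa : x ∈ a) (hx : x ≠ 0)
    (hy : y ≠ 0) (hxy : nu k x ≤ nu k y) : y ∈ a := by
  have hc : y * x⁻¹ ≠ 0 := mul_ne_zero hy (inv_ne_zero hx)
  have hyx : y * x⁻¹ * x = y := inv_mul_cancel_right₀ hx y
  have hcO : y * x⁻¹ ∈ Oprime k := by
    rw [mem_Oprime_iff_nu_nonneg hc, ← le_add_iff_nonneg_left (nu k x), ← nu_mul hc hx, hyx]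
    exact hxy
  simpa only [Subring.smul_def, smul_eq_mul, hyx] using a.smul_mem ⟨_, hcO⟩ hxa

lemma mem_iff_exists_nu_le (a : Submodule (Oprime k) (K k)) {x : K k} (hx : x ≠ 0) :
    x ∈ a ↔ ∃ y ∈ a, y ≠ 0 ∧ nu k y ≤ nu k x :=
  ⟨fun hxa => ⟨x, hxa, hx, le_rfl⟩, fun ⟨_, hya, hy, hyx⟩ => mem_of_nu_le a hya hy hx hyx⟩

lemma eq_span_singleton_of_nu_le (a : Submodule (Oprime k) (K k)) {x : K k} (hxa : x ∈ a)
    (hx : x ≠ 0) (hmin : ∀ y ∈ a, y ≠ 0 → nu k x ≤ nu k y) :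
    a = Submodule.span (Oprime k) {x} := by
  refine le_antisymm (fun y hya => ?_) (Submodule.span_le.2 (Set.singleton_subset_iff.2 hxa))
  rcases eq_or_ne y 0 with rfl | hy
  · exact zero_mem _
  · exact mem_of_nu_le _ (Submodule.subset_span rfl) hx hy (hmin y hya hy)

lemma u_zpow_mul_t_zpow (i n : ℤ) : u k ^ i * t k ^ n = single n (single i (1 : k)) := by
  rw [u, t, ← map_zpow₀, ← RatFunc.single_zpow (F := k), ← RatFunc.single_zpow (F := K1 k),
    C_apply, single_mul_single, zero_add, mul_one]

lemma u_zpow_mul_t_zpow_ne_zero (i n : ℤ) : u k ^ i * t k ^ n ≠ 0 := by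
  rw [u_zpow_mul_t_zpow]
  exact single_ne_zero (single_ne_zero one_ne_zero)

lemma nu_u_zpow_mul_t_zpow (i n : ℤ) : nu k (u k ^ i * t k ^ n) = toLex (n, i) := by
  rw [nu, u_zpow_mul_t_zpow, order_single (single_ne_zero one_ne_zero), coeff_single_same,
    order_single one_ne_zero]

lemma order_u_zpow_mul_t_zpow (i n : ℤ) : (u k ^ i * t k ^ n).order = n :=
  congrArg (fun z => (ofLex z).1) (nu_u_zpow_mul_t_zpow i n)

lemma mem_wp_iff {n : ℤ} {x : K k} : x ∈ wp k n ↔ x = 0 ∨ n ≤ x.order := by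
  constructor
  · intro hx
    induction hx using Submodule.span_induction with
    | mem x hx =>
      obtain ⟨i, rfl⟩ := hx
      exact Or.inr (order_u_zpow_mul_t_zpow i n).ge
    | zero => exact Or.inl rfl
    | add x y _ _ hx hy =>
      rcases eq_or_ne (x + y) 0 with h | h
      · exact Or.inl h
      rcases hx with rfl | hx
      · rwa [zero_add]
      rcases hy with rfl | hy
      · rw [add_zero]
        exact Or.inr hx
      exact Or.inr ((le_min hx hy).trans (min_order_le_order_add h))
    | smul c x _ hx =>
      rw [Subring.smul_def, smul_eq_mul]
      rcases eq_or_ne (c : K k) 0 with hc | hc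
      · exact Or.inl (by rw [hc, zero_mul])
      rcases eq_or_ne x 0 with rfl | hx0
      · exact Or.inl (mul_zero _)
      refine Or.inr ?_
      replace hx := hx.resolve_left hx0
      rw [order_mul hc hx0]
      linarith [order_nonneg_of_mem_Oprime c.2 hc]
  · intro hx
    rcases eq_or_ne x 0 with rfl | hx0
    · exact zero_mem _
    replace hx := hx.resolve_left hx0
    refine mem_of_nu_le _ (Submodule.subset_span ⟨(x.coeff x.order).order, rfl⟩)
      (u_zpow_mul_t_zpow_ne_zero _ _) hx0 ?_
    rw [nu_u_zpow_mul_t_zpow, nu, Prod.Lex.toLex_le_toLex]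
    rcases hx.lt_or_eq with h | h
    · exact Or.inl h
    · exact Or.inr ⟨h, le_rfl⟩

theorem wp_injective : Function.Injective (wp k) := by
  have key : ∀ m n : ℤ, wp k m ≤ wp k n → n ≤ m := fun m n hmn => by
    have hgen : u k ^ (0 : ℤ) * t k ^ m ∈ wp k m := Submodule.subset_span ⟨0, rfl⟩
    simpa only [order_u_zpow_mul_t_zpow, u_zpow_mul_t_zpow_ne_zero, false_or] using
      mem_wp_iff.1 (hmn hgen)
  exact fun m n h => le_antisymm (key n m h.ge) (key m n h.le)

end

theorem non_fg_fractional_ideal_eq_wp_general (k : Type) [Field k]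
    (a : Submodule (Oprime k) (K k))
    (hfrac : ∃ d : K k, d ≠ 0 ∧ ∀ x ∈ a, d * x ∈ Oprime k)
    (hnfg : ¬ a.FG) :
    ∃! n : ℤ, a = wp k n := by
  obtain ⟨d, hd, hda⟩ := hfrac
  set S := nu k '' {x | x ∈ a ∧ x ≠ 0}
  have hne : S.Nonempty := by
    obtain ⟨x, hxa, hx⟩ := a.ne_bot_iff.1 fun h => hnfg (h ▸ Submodule.fg_bot)
    exact ⟨_, x, ⟨hxa, hx⟩, rfl⟩
  have hbdd : BddBelow ((fun s => (ofLex s).1) '' S) := by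
    refine ⟨-d.order, ?_⟩
    rintro _ ⟨_, ⟨x, ⟨hxa, hx⟩, rfl⟩, rfl⟩
    exact neg_order_le_order_of_mul_mem_Oprime hd hx (hda x hxa)
  have hS : ∀ s, ¬ IsLeast S s := by
    rintro _ ⟨⟨x, ⟨hxa, hx⟩, rfl⟩, hmin⟩
    refine hnfg ⟨{x}, ?_⟩
    rw [Finset.coe_singleton,
      eq_span_singleton_of_nu_le a hxa hx fun y hya hy => hmin ⟨y, ⟨hya, hy⟩, rfl⟩]
  obtain ⟨n, hn⟩ := Prod.Lex.exists_forall_exists_le_iff_of_not_isLeast hne hbdd hS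
  have ha : a = wp k n := by
    ext x
    rcases eq_or_ne x 0 with rfl | hx
    · simp only [zero_mem]
    rw [mem_wp_iff, or_iff_right hx, mem_iff_exists_nu_le a hx,
      show n ≤ x.order ↔ n ≤ (ofLex (nu k x)).1 from Iff.rfl, ← hn, Set.exists_mem_image]
    simp only [Set.mem_ofPred_eq, and_assoc]
  exact ⟨n, ha, fun m hm => wp_injective (hm.symm.trans ha)⟩

/-- Every nonzero fractional `O'`-ideal of `K` which is not finitely
generated as an `O'`-module equals `℘ₙ = tⁿ·O_K` for a uniquely determined `n ∈ ℤ`. -/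
theorem non_fg_fractional_ideal_eq_wp (k : Type) [Field k]
    (a : Submodule (Oprime k) (K k)) (ha : a ≠ ⊥)
    (hfrac : ∃ d : K k, d ≠ 0 ∧ ∀ x ∈ a, d * x ∈ Oprime k)
    (hnfg : ¬ a.FG) :
    ∃! n : ℤ, a = wp k n :=
  non_fg_fractional_ideal_eq_wp_general k a hfrac hnfg

end TwoDimLocal
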